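/- Every acceptable Hintikka set H is either saturated or Leibniz-free (the 'Impredicativity Gap'): either for every closed formula s one of s, ¬s is in H, or H contains no Leibniz equation s ≐ t at all. -/
import Mathlib


namespace HintikkaHOL

/-- Simple types over base types `o` (Booleans) and `i` (individuals). -/
inductive Ty : Type
  | o : Ty
  | i : Ty
  | arr : Ty → Ty → Ty
deriving DecidableEq

open Ty

/-- Typed de Bruijn variables. -/
inductive Var : List Ty → Ty → Type
  | vz {Γ τ} : Var (τ :: Γ) τ
  | vs {Γ σ τ} : Var Γ τ → Var (σ :: Γ) τ

/-- Terms of Church's type theory over a signature `S` of parameters,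
with primitive equality `eq τ : τ → τ → o` as the only logical constant. -/
inductive Tm (S : Ty → Type) : List Ty → Ty → Type
  | var {Γ τ} : Var Γ τ → Tm S Γ τ
  | par {Γ τ} : S τ → Tm S Γ τ
  | eq {Γ} (τ : Ty) : Tm S Γ (arr τ (arr τ o))
  | app {Γ a b} : Tm S Γ (arr a b) → Tm S Γ a → Tm S Γ b
  | lam {Γ a b} : Tm S (a :: Γ) b → Tm S Γ (arr a b)

variable {S : Ty → Type}

/-- Renamings. -/
abbrev Ren (Γ Δ : List Ty) : Type := ∀ τ, Var Γ τ → Var Δ τ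

def Ren.lift {Γ Δ} (r : Ren Γ Δ) (σ : Ty) : Ren (σ :: Γ) (σ :: Δ)
  | _, .vz => .vz
  | _, .vs w => .vs (r _ w)

def rename {Γ Δ} (r : Ren Γ Δ) : ∀ {τ}, Tm S Γ τ → Tm S Δ τ
  | _, .var v => .var (r _ v)
  | _, .par p => .par p
  | _, .eq τ => .eq τ
  | _, .app f a => .app (rename r f) (rename r a)
  | _, .lam b => .lam (rename (Ren.lift r _) b)

/-- Substitutions. -/
abbrev Sub (S : Ty → Type) (Γ Δ : List Ty) : Type := ∀ τ, Var Γ τ → Tm S Δ τ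

def Sub.lift {Γ Δ} (s : Sub S Γ Δ) (σ : Ty) : Sub S (σ :: Γ) (σ :: Δ)
  | _, .vz => .var .vz
  | _, .vs w => rename (fun _ u => Var.vs u) (s _ w)

def subst {Γ Δ} (s : Sub S Γ Δ) : ∀ {τ}, Tm S Γ τ → Tm S Δ τ
  | _, .var v => s _ v
  | _, .par p => .par p
  | _, .eq τ => .eq τ
  | _, .app f a => .app (subst s f) (subst s a)
  | _, .lam b => .lam (subst (Sub.lift s _) b)

/-- The substitution sending the outermost variable to `a`. -/
def Sub.single {Γ σ} (a : Tm S Γ σ) : Sub S (σ :: Γ) Γ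
  | _, .vz => a
  | _, .vs w => .var w

def subst1 {Γ σ τ} (a : Tm S Γ σ) (b : Tm S (σ :: Γ) τ) : Tm S Γ τ :=
  subst (Sub.single a) b

/-- Weakening of a closed term into any context. -/
def Ren.fromEmpty {Γ} : Ren [] Γ := fun _ v => nomatch v

def wk0 {Γ τ} (t : Tm S [] τ) : Tm S Γ τ :=
  rename Ren.fromEmpty t

/-- The equation `s =^τ t`. -/
def eqT {Γ} (τ : Ty) (s t : Tm S Γ τ) : Tm S Γ o :=
  .app (.app (.eq τ) s) t

/-- `⊤ := (=^o) =^{ooo} (=^o)`. -/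
def topT {Γ} : Tm S Γ o :=
  eqT (arr o (arr o o)) (.eq o) (.eq o)

/-- `⊥ := (λP:o. P) =^{oo} (λP:o. ⊤)`. -/
def botT {Γ} : Tm S Γ o :=
  eqT (arr o o) (.lam (.var .vz)) (.lam topT)

/-- `¬ := λP:o. P =^o ⊥`. -/
def notC {Γ} : Tm S Γ (arr o o) :=
  .lam (eqT o (.var .vz) botT)

/-- `¬ s`. -/
def negT {Γ} (s : Tm S Γ o) : Tm S Γ o :=
  .app notC s

/-- `∧ := λP Q. (λF:ooo. F ⊤ ⊤) =^{o(ooo)} (λF. F P Q)`. -/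
def andC {Γ} : Tm S Γ (arr o (arr o o)) :=
  .lam (.lam (eqT (arr (arr o (arr o o)) o)
    (.lam (.app (.app (.var .vz) topT) topT))
    (.lam (.app (.app (.var .vz) (.var (.vs (.vs .vz)))) (.var (.vs .vz))))))

/-- `∨ := λP Q. ¬(¬P ∧ ¬Q)`. -/
def orC {Γ} : Tm S Γ (arr o (arr o o)) :=
  .lam (.lam (negT (.app (.app andC (negT (.var (.vs .vz)))) (negT (.var .vz)))))

/-- `⇒ := λP Q. ¬P ∨ Q`. -/
def impC {Γ} : Tm S Γ (arr o (arr o o)) :=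
  .lam (.lam (.app (.app orC (negT (.var (.vs .vz)))) (.var .vz)))

/-- `Π^τ := λP:oτ. P =^{oτ} (λX:τ. ⊤)`. -/
def piC {Γ} (τ : Ty) : Tm S Γ (arr (arr τ o) o) :=
  .lam (eqT (arr τ o) (.var .vz) (.lam topT))

/-- Leibniz equality `s ≐ t := Π^{oτ} (λP:oτ. (P s) ⇒ (P t))`. -/
def leibT {Γ τ} (s t : Tm S Γ τ) : Tm S Γ o :=
  .app (piC (arr τ o))
    (.lam (.app (.app impC (.app (.var .vz) (rename (fun _ v => Var.vs v) s)))
                (.app (.var .vz) (rename (fun _ v => Var.vs v) t))))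

/-- βη-conversion. -/
inductive Conv : ∀ {Γ : List Ty} {τ : Ty}, Tm S Γ τ → Tm S Γ τ → Prop
  | refl {Γ τ} (s : Tm S Γ τ) : Conv s s
  | symm {Γ τ} {s t : Tm S Γ τ} : Conv s t → Conv t s
  | trans {Γ τ} {s t u : Tm S Γ τ} : Conv s t → Conv t u → Conv s u
  | appCongr {Γ a b} {f f' : Tm S Γ (arr a b)} {s s' : Tm S Γ a} :
      Conv f f' → Conv s s' → Conv (.app f s) (.app f' s')
  | lamCongr {Γ a b} {s s' : Tm S (a :: Γ) b} :
      Conv s s' → Conv (.lam s) (.lam s')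
  | beta {Γ a b} (body : Tm S (a :: Γ) b) (s : Tm S Γ a) :
      Conv (.app (.lam body) s) (subst1 s body)
  | eta {Γ a b} (f : Tm S Γ (arr a b)) :
      Conv (.lam (.app (rename (fun _ v => Var.vs v) f) (.var .vz))) f

/-- Atomic formulas: head symbol is a parameter (or a variable). -/
inductive Atomic : ∀ {Γ : List Ty} {τ : Ty}, Tm S Γ τ → Prop
  | par {Γ τ} (p : S τ) : Atomic (Tm.par (Γ := Γ) p)
  | var {Γ τ} (v : Var Γ τ) : Atomic (Tm.var (S := S) v)
  | app {Γ a b} {f : Tm S Γ (arr a b)} {s : Tm S Γ a} : Atomic f → Atomic (.app f s)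

/-- Paired spines of closed arguments, for the decomposition property `∇_d`:
a value of `Spine2 S σ τ` is a list of pairs `(sⁱ, tⁱ)` of closed terms turning a head
of type `σ` into two applications `h s¹ … sⁿ` and `h t¹ … tⁿ` of type `τ`. -/
inductive Spine2 (S : Ty → Type) : Ty → Ty → Type
  | nil {τ} : Spine2 S τ τ
  | cons {a σ τ} (s t : Tm S [] a) (rest : Spine2 S σ τ) : Spine2 S (arr a σ) τ

def appSpineL : ∀ {σ τ}, Tm S [] σ → Spine2 S σ τ → Tm S [] τ
  | _, _, h, .nil => h
  | _, _, h, .cons s _ rest => appSpineL (.app h s) rest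

def appSpineR : ∀ {σ τ}, Tm S [] σ → Spine2 S σ τ → Tm S [] τ
  | _, _, h, .nil => h
  | _, _, h, .cons _ t rest => appSpineR (.app h t) rest

/-- `∃ i, (sⁱ ≠ tⁱ) ∈ H` for a paired spine. -/
def ExistsNeq (H : Set (Tm S [] o)) : ∀ {σ τ}, Spine2 S σ τ → Prop
  | _, _, .nil => False
  | _, _, .cons (a := a) s t rest => negT (eqT a s t) ∈ H ∨ ExistsNeq H rest

/-- Steen's acceptable Hintikka sets: sets of closed formulas (sentences) satisfying
the ten properties `∇_c, ∇_βη, ∇_=^r, ∇_=^s, ∇_b^+, ∇_b^-, ∇_f^+, ∇_f^-, ∇_m, ∇_d`. -/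
structure Acceptable (S : Ty → Type) (H : Set (Tm S [] o)) : Prop where
  nabla_c : ∀ s : Tm S [] o, ¬ (s ∈ H ∧ negT s ∈ H)
  nabla_betaEta : ∀ s t : Tm S [] o, Conv s t → s ∈ H → t ∈ H
  nabla_eq_r : ∀ {τ} (s : Tm S [] τ), negT (eqT τ s s) ∉ H
  nabla_eq_s : ∀ {τ} (u : Tm S [τ] o) (s t : Tm S [] τ),
      subst1 s u ∈ H → eqT τ s t ∈ H → subst1 t u ∈ H
  nabla_b_pos : ∀ s t : Tm S [] o, eqT o s t ∈ H →
      (s ∈ H ∧ t ∈ H) ∨ (negT s ∈ H ∧ negT t ∈ H)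
  nabla_b_neg : ∀ s t : Tm S [] o, negT (eqT o s t) ∈ H →
      (s ∈ H ∧ negT t ∈ H) ∨ (negT s ∈ H ∧ t ∈ H)
  nabla_f_pos : ∀ {a b} (f g : Tm S [] (arr a b)), eqT (arr a b) f g ∈ H →
      ∀ s : Tm S [] a, eqT b (.app f s) (.app g s) ∈ H
  nabla_f_neg : ∀ {a b} (f g : Tm S [] (arr a b)), negT (eqT (arr a b) f g) ∈ H →
      ∃ w : S a, negT (eqT b (.app f (.par w)) (.app g (.par w))) ∈ H
  nabla_m : ∀ s t : Tm S [] o, Atomic s → Atomic t → s ∈ H → negT t ∈ H →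
      negT (eqT o s t) ∈ H
  nabla_d : ∀ {σ τ} (h : Tm S [] σ) (sp : Spine2 S σ τ),
      negT (eqT τ (appSpineL h sp) (appSpineR h sp)) ∈ H → ExistsNeq H sp

/-- `H` is saturated iff `s ∈ H` or `¬s ∈ H` for every closed formula `s`. -/
def Saturated (H : Set (Tm S [] o)) : Prop :=
  ∀ s : Tm S [] o, s ∈ H ∨ negT s ∈ H

variable {S : Ty → Type} {H : Set (Tm S [] Ty.o)}

/-! ### Auxiliary substitution lemmas -/

theorem rename_ext {Γ τ} (t : Tm S Γ τ) : ∀ {Δ} (r r' : Ren Γ Δ),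
    (∀ τ v, r τ v = r' τ v) → rename r t = rename r' t := by
  induction t with
  | var v => intro Δ r r' h; simp [rename, h]
  | par p => intros; rfl
  | eq τ => intros; rfl
  | app f a ihf iha => intro Δ r r' h; simp [rename, ihf _ _ h, iha _ _ h]
  | lam b ih =>
    intro Δ r r' h
    simp only [rename]
    congr 1
    apply ih
    intro τ v
    cases v with
    | vz => rfl
    | vs w => simp [Ren.lift, h]

theorem rename_rename {Γ τ} (t : Tm S Γ τ) : ∀ {Δ Θ} (r1 : Ren Γ Δ) (r2 : Ren Δ Θ),
    rename r2 (rename r1 t) = rename (fun τ v => r2 τ (r1 τ v)) t := by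
  induction t with
  | var v => intros; rfl
  | par p => intros; rfl
  | eq τ => intros; rfl
  | app f a ihf iha => intro Δ Θ r1 r2; simp [rename, ihf, iha]
  | lam b ih =>
    intro Δ Θ r1 r2
    simp only [rename]
    congr 1
    rw [ih]
    apply rename_ext
    intro τ v
    cases v with
    | vz => rfl
    | vs w => rfl

theorem rename_id {Γ τ} (t : Tm S Γ τ) : rename (fun _ v => v) t = t := by
  induction t with
  | var v => rfl
  | par p => rfl
  | eq τ => rfl
  | app f a ihf iha => simp [rename, ihf, iha]
  | lam b ih =>
    simp only [rename]
    congr 1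
    refine (rename_ext b _ (fun _ v => v) ?_).trans ih
    intro τ v; cases v <;> rfl

theorem subst_ext {Γ τ} (t : Tm S Γ τ) : ∀ {Δ} (σ σ' : Sub S Γ Δ),
    (∀ τ v, σ τ v = σ' τ v) → subst σ t = subst σ' t := by
  induction t with
  | var v => intro Δ σ σ' h; simp [subst, h]
  | par p => intros; rfl
  | eq τ => intros; rfl
  | app f a ihf iha => intro Δ σ σ' h; simp [subst, ihf _ _ h, iha _ _ h]
  | lam b ih =>
    intro Δ σ σ' h
    simp only [subst]
    congr 1
    apply ih
    intro τ v
    cases v with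
    | vz => rfl
    | vs w => simp [Sub.lift, h]

theorem subst_of_ren {Γ τ} (t : Tm S Γ τ) : ∀ {Δ} (r : Ren Γ Δ),
    subst (fun τ v => .var (r τ v)) t = rename r t := by
  induction t with
  | var v => intros; rfl
  | par p => intros; rfl
  | eq τ => intros; rfl
  | app f a ihf iha => intro Δ r; simp [subst, rename, ihf, iha]
  | lam b ih =>
    intro Δ r
    simp only [subst, rename]
    congr 1
    rw [← ih]
    apply subst_ext
    intro τ v
    cases v with
    | vz => rfl
    | vs w => rfl

theorem subst_rename {Γ τ} (t : Tm S Γ τ) : ∀ {Δ Θ} (r : Ren Γ Δ) (σ : Sub S Δ Θ),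
    subst σ (rename r t) = subst (fun τ v => σ τ (r τ v)) t := by
  induction t with
  | var v => intros; rfl
  | par p => intros; rfl
  | eq τ => intros; rfl
  | app f a ihf iha => intro Δ Θ r σ; simp [subst, rename, ihf, iha]
  | lam b ih =>
    intro Δ Θ r σ
    simp only [subst, rename]
    congr 1
    rw [ih]
    apply subst_ext
    intro τ v
    cases v with
    | vz => rfl
    | vs w => rfl

/-- Any substitution applied to (a weakening of) a closed term yields its weakening. -/
theorem subst_closed {Δ τ} (σ : Sub S [] Δ) (u : Tm S [] τ) :
    subst σ u = rename Ren.fromEmpty u := by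
  rw [← subst_of_ren]
  apply subst_ext
  intro τ v
  exact nomatch v

theorem rename_closed {Γ τ} (r : Ren [] Γ) (u : Tm S [] τ) :
    rename r u = rename Ren.fromEmpty u := by
  apply rename_ext
  intro τ v
  exact nomatch v

theorem rename_closed_nil {τ} (u : Tm S [] τ) :
    rename (Ren.fromEmpty (Γ := [])) u = u :=
  (rename_ext u _ _ (fun _ v => nomatch v)).trans (rename_id u)

theorem subst_ren_closed {Γ Δ τ} (σ : Sub S Γ Δ) (r : Ren [] Γ) (u : Tm S [] τ) :
    subst σ (rename r u) = rename Ren.fromEmpty u := by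
  rw [subst_rename]
  exact subst_closed _ u

theorem subst_ren_closed_nil {Γ τ} (σ : Sub S Γ []) (r : Ren [] Γ) (u : Tm S [] τ) :
    subst σ (rename r u) = u := by
  rw [subst_ren_closed, rename_closed_nil]
/-! ### Conversion helpers -/

theorem conv_eq_congr {Γ τ} {a a' b b' : Tm S Γ τ} (ha : Conv a a') (hb : Conv b b') :
    Conv (eqT τ a b) (eqT τ a' b') :=
  Conv.appCongr (Conv.appCongr (Conv.refl _) ha) hb

theorem conv_neg_congr {Γ} {a a' : Tm S Γ o} (h : Conv a a') : Conv (negT a) (negT a') :=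
  Conv.appCongr (Conv.refl _) h

theorem conv_beta' {Γ a b} (body : Tm S (a :: Γ) b) (z : Tm S Γ a) {t : Tm S Γ b}
    (h : subst1 z body = t) : Conv (.app (.lam body) z) t := h ▸ Conv.beta body z

/-- `¬P` converts to `P =ᵒ ⊥`. -/
theorem conv_neg {Γ} (P : Tm S Γ o) : Conv (negT P) (eqT o P botT) :=
  Conv.beta (eqT o (.var .vz) botT) P

/-- `P ⇒ Q` converts to `(¬P) ∨ Q`. -/
theorem conv_imp (P Q : Tm S [] o) :
    Conv (.app (.app impC P) Q) (.app (.app orC (negT P)) Q) := by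
  have h1 : Conv (.app (.app (impC (S := S)) P) Q)
      (.app (.lam (.app (.app orC (negT (rename (fun _ v => Var.vs v) P))) (.var .vz))) Q) :=
    Conv.appCongr (Conv.beta _ P) (Conv.refl Q)
  refine h1.trans ?_
  have h2 := Conv.beta (S := S)
      (.app (.app orC (negT (rename (fun _ v => Var.vs v) P))) (.var .vz)) Q
  have e : subst1 (S := S) Q
      (.app (.app orC (negT (rename (fun _ v => Var.vs v) P))) (.var .vz))
      = .app (.app orC (negT P)) Q := by
    show Tm.app (.app orC (negT (subst (Sub.single Q) (rename (fun _ v => Var.vs v) P)))) Q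
      = .app (.app orC (negT P)) Q
    rw [subst_ren_closed_nil]
  rwa [e] at h2
/-- `P ∨ Q` converts to `¬(¬P ∧ ¬Q)`. -/
theorem conv_or (P Q : Tm S [] o) :
    Conv (.app (.app orC P) Q) (negT (.app (.app andC (negT P)) (negT Q))) := by
  have h1 : Conv (.app (.app (orC (S := S)) P) Q)
      (.app (.lam (negT (.app (.app andC (negT (rename (fun _ v => Var.vs v) P)))
        (negT (.var .vz))))) Q) :=
    Conv.appCongr (Conv.beta _ P) (Conv.refl Q)
  refine h1.trans ?_
  have h2 := Conv.beta (S := S)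
      (negT (.app (.app andC (negT (rename (fun _ v => Var.vs v) P))) (negT (.var .vz)))) Q
  have e : subst1 (S := S) Q
      (negT (.app (.app andC (negT (rename (fun _ v => Var.vs v) P))) (negT (.var .vz))))
      = negT (.app (.app andC (negT P)) (negT Q)) := by
    show negT (.app (.app andC (negT (subst (Sub.single Q)
        (rename (fun _ v => Var.vs v) P)))) (negT Q))
      = negT (.app (.app andC (negT P)) (negT Q))
    rw [subst_ren_closed_nil]
  rwa [e] at h2

/-- `P ∧ Q` converts to `(λF. F ⊤ ⊤) = (λF. F P Q)`. -/
theorem conv_and (P Q : Tm S [] o) :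
    Conv (.app (.app andC P) Q)
      (eqT (arr (arr o (arr o o)) o)
        (.lam (.app (.app (.var .vz) topT) topT))
        (.lam (.app (.app (.var .vz) (wk0 P)) (wk0 Q)))) := by
  have h1 : Conv (.app (.app (andC (S := S)) P) Q)
      (.app (.lam (eqT (arr (arr o (arr o o)) o)
        (.lam (.app (.app (.var .vz) topT) topT))
        (.lam (.app (.app (.var .vz)
          (rename (fun _ v => Var.vs v) (rename (fun _ v => Var.vs v) P)))
          (.var (.vs .vz)))))) Q) :=
    Conv.appCongr (Conv.beta _ P) (Conv.refl Q)
  refine h1.trans ?_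
  have h2 := Conv.beta (S := S)
      (eqT (arr (arr o (arr o o)) o)
        (.lam (.app (.app (.var .vz) topT) topT))
        (.lam (.app (.app (.var .vz)
          (rename (fun _ v => Var.vs v) (rename (fun _ v => Var.vs v) P)))
          (.var (.vs .vz))))) Q
  have e : subst1 (S := S) Q
      (eqT (arr (arr o (arr o o)) o)
        (.lam (.app (.app (.var .vz) topT) topT))
        (.lam (.app (.app (.var .vz)
          (rename (fun _ v => Var.vs v) (rename (fun _ v => Var.vs v) P)))
          (.var (.vs .vz)))))
      = eqT (arr (arr o (arr o o)) o)
        (.lam (.app (.app (.var .vz) topT) topT))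
        (.lam (.app (.app (.var .vz) (wk0 P)) (wk0 Q))) := by
    show eqT (arr (arr o (arr o o)) o)
        (.lam (.app (.app (.var .vz) topT) topT))
        (.lam (.app (.app (.var .vz)
          (subst (Sub.lift (Sub.single Q) _)
            (rename (fun _ v => Var.vs v) (rename (fun _ v => Var.vs v) P))))
          (rename (fun _ v => Var.vs v) Q)))
      = _
    rw [rename_rename, subst_ren_closed, rename_closed (fun τ v => Var.vs v) Q]
    rfl
  rwa [e] at h2
variable {H : Set (Tm S [] Ty.o)}

/-- If `⊥ ∈ H` then everything is in `H`. -/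
theorem bot_mem (hH : Acceptable S H) (hb : botT ∈ H) (s : Tm S [] o) : s ∈ H := by
  have h1 : eqT o (.app (.lam (.var .vz)) s) (.app (.lam topT) s) ∈ H :=
    hH.nabla_f_pos _ _ hb s
  have h2 : eqT o s topT ∈ H :=
    hH.nabla_betaEta _ _ (conv_eq_congr (conv_beta' (Tm.var .vz) s rfl) (conv_beta' topT s rfl)) h1
  rcases hH.nabla_b_pos _ _ h2 with ⟨hs, _⟩ | ⟨_, ht⟩
  · exact hs
  · exact absurd ht (hH.nabla_eq_r (Tm.eq (S := S) o))

/-- Double negation elimination (modulo `⊥ ∈ H`). -/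
theorem dne (hH : Acceptable S H) {v : Tm S [] o} (h : negT (negT v) ∈ H) :
    v ∈ H ∨ botT ∈ H := by
  have h1 : eqT o (eqT o v botT) botT ∈ H :=
    hH.nabla_betaEta _ _
      ((conv_neg (negT v)).trans (conv_eq_congr (conv_neg v) (Conv.refl _))) h
  rcases hH.nabla_b_pos _ _ h1 with ⟨_, hb⟩ | ⟨hn, _⟩
  · exact Or.inr hb
  · rcases hH.nabla_b_neg _ _ hn with ⟨hv, _⟩ | ⟨_, hb⟩
    · exact Or.inl hv
    · exact Or.inr hb

/-- From a Leibniz equation in `H`, quasi-saturation for every sentence. -/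
theorem key (hH : Acceptable S H) {τ : Ty} {s t : Tm S [] τ} (hst : leibT s t ∈ H)
    (u : Tm S [] o) : u ∈ H ∨ negT u ∈ H ∨ botT ∈ H := by
  have hB : eqT (arr (arr τ o) o)
      (.lam (.app (.app impC (.app (.var .vz) (rename (fun _ v => Var.vs v) s)))
                  (.app (.var .vz) (rename (fun _ v => Var.vs v) t))))
      (.lam topT) ∈ H :=
    hH.nabla_betaEta _ _
      (Conv.beta (eqT (arr (arr τ o) o) (.var .vz) (.lam topT)) _) hst
  have hC : eqT o
      (.app (.lam (.app (.app impC (.app (.var .vz) (rename (fun _ v => Var.vs v) s)))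
                  (.app (.var .vz) (rename (fun _ v => Var.vs v) t)))) (.lam (wk0 u)))
      (.app (.lam topT) (.lam (wk0 u))) ∈ H :=
    hH.nabla_f_pos _ _ hB (.lam (wk0 u))
  -- convert the left side to `u ⇒ u`
  have cP : ∀ z : Tm S [] τ, Conv (.app (.lam (wk0 u)) z) u := by
    intro z
    have c := Conv.beta (wk0 u) z
    have e : subst1 (S := S) z (wk0 u) = u := by
      unfold wk0
      exact subst_ren_closed_nil _ _ u
    rwa [e] at c
  have cL : Conv
      (.app (.lam (.app (.app impC (.app (.var .vz) (rename (fun _ v => Var.vs v) s)))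
                  (.app (.var .vz) (rename (fun _ v => Var.vs v) t)))) (.lam (wk0 u)))
      (.app (.app impC u) u) := by
    have c1 := Conv.beta (S := S)
      (.app (.app impC (.app (.var .vz) (rename (fun _ v => Var.vs v) s)))
            (.app (.var .vz) (rename (fun _ v => Var.vs v) t))) (.lam (wk0 u))
    have e : subst1 (S := S) (.lam (wk0 u))
        (.app (.app impC (.app (.var .vz) (rename (fun _ v => Var.vs v) s)))
              (.app (.var .vz) (rename (fun _ v => Var.vs v) t)))
        = .app (.app impC (.app (.lam (wk0 u)) s)) (.app (.lam (wk0 u)) t) := by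
      show Tm.app (.app impC (.app (.lam (wk0 u))
          (subst (Sub.single (.lam (wk0 u))) (rename (fun _ v => Var.vs v) s))))
          (.app (.lam (wk0 u)) (subst (Sub.single (.lam (wk0 u)))
            (rename (fun _ v => Var.vs v) t))) = _
      rw [subst_ren_closed_nil, subst_ren_closed_nil]
    rw [e] at c1
    exact c1.trans (Conv.appCongr (Conv.appCongr (Conv.refl _) (cP s)) (cP t))
  have hD : eqT o (.app (.app impC u) u) topT ∈ H :=
    hH.nabla_betaEta _ _ (conv_eq_congr cL (conv_beta' topT (.lam (wk0 u)) (show subst1 (S := S) (.lam (wk0 u)) (topT (Γ := [arr τ o])) = topT from rfl))) hC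
  have himp : .app (.app impC u) u ∈ H := by
    rcases hH.nabla_b_pos _ _ hD with ⟨h1, _⟩ | ⟨_, h2⟩
    · exact h1
    · exact absurd h2 (hH.nabla_eq_r (Tm.eq (S := S) o))
  have hor : .app (.app orC (negT u)) u ∈ H :=
    hH.nabla_betaEta _ _ (conv_imp u u) himp
  have hand : negT (.app (.app andC (negT (negT u))) (negT u)) ∈ H :=
    hH.nabla_betaEta _ _ (conv_or (negT u) u) hor
  have hbe : eqT o (.app (.app andC (negT (negT u))) (negT u)) botT ∈ H :=
    hH.nabla_betaEta _ _ (conv_neg _) hand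
  rcases hH.nabla_b_pos _ _ hbe with ⟨_, hb⟩ | ⟨hnA, _⟩
  · exact Or.inr (Or.inr hb)
  have hfe : negT (eqT (arr (arr o (arr o o)) o)
      (.lam (.app (.app (.var .vz) topT) topT))
      (.lam (.app (.app (.var .vz) (wk0 (negT (negT u)))) (wk0 (negT u))))) ∈ H :=
    hH.nabla_betaEta _ _ (conv_neg_congr (conv_and _ _)) hnA
  obtain ⟨w, hw⟩ := hH.nabla_f_neg _ _ hfe
  have cR : Conv (.app (.lam (.app (.app (.var .vz) (wk0 (negT (negT u)))) (wk0 (negT u))))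
      (.par w)) (.app (.app (.par w) (negT (negT u))) (negT u)) := by
    have c := Conv.beta (S := S) (Γ := [])
      (.app (.app (.var .vz) (wk0 (negT (negT u)))) (wk0 (negT u))) (.par w)
    have e : subst1 (S := S) (.par w)
        (.app (.app (.var .vz) (wk0 (negT (negT u)))) (wk0 (negT u)))
        = .app (.app (.par w) (negT (negT u))) (negT u) := by
      show Tm.app (.app (.par w) (subst (Sub.single (.par w)) (wk0 (negT (negT u)))))
          (subst (Sub.single (.par w)) (wk0 (negT u))) = _
      unfold wk0
      rw [subst_ren_closed_nil, subst_ren_closed_nil]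
    rwa [e] at c
  have hw2 : negT (eqT o (.app (.app (.par w) topT) topT)
      (.app (.app (.par w) (negT (negT u))) (negT u))) ∈ H :=
    hH.nabla_betaEta _ _
      (conv_neg_congr (conv_eq_congr (conv_beta' (.app (.app (.var .vz) topT) topT) (.par w) rfl) cR)) hw
  have hd := hH.nabla_d (.par w)
    (.cons topT (negT (negT u)) (.cons topT (negT u) .nil)) hw2
  simp only [ExistsNeq] at hd
  rcases hd with h1 | h2 | h3
  · rcases hH.nabla_b_neg _ _ h1 with ⟨_, hn⟩ | ⟨hnt, _⟩
    · rcases dne hH hn with h | h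
      · exact Or.inr (Or.inl h)
      · exact Or.inr (Or.inr h)
    · exact absurd hnt (hH.nabla_eq_r (Tm.eq (S := S) o))
  · rcases hH.nabla_b_neg _ _ h2 with ⟨_, hn⟩ | ⟨hnt, _⟩
    · rcases dne hH hn with h | h
      · exact Or.inl h
      · exact Or.inr (Or.inr h)
    · exact absurd hnt (hH.nabla_eq_r (Tm.eq (S := S) o))
  · exact h3.elim

variable {S : Ty → Type} {H : Set (Tm S [] Ty.o)}

/-- The Impredicativity Gap: every acceptable Hintikka set is saturated or Leibniz-free. -/
theorem saturated_or_leibnizFree (hH : Acceptable S H) :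
    Saturated H ∨ ∀ {τ : Ty} (s t : Tm S [] τ), leibT s t ∉ H := by
  by_cases h : ∃ τ : Ty, ∃ s t : Tm S [] τ, leibT s t ∈ H
  · left
    obtain ⟨τ, s, t, hst⟩ := h
    intro u
    rcases key hH hst u with h1 | h2 | hb
    · exact Or.inl h1
    · exact Or.inr h2
    · exact Or.inl (bot_mem hH hb u)
  · right
    intro τ s t hst
    exact h ⟨τ, s, t, hst⟩

end HintikkaHOL
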